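/- arXiv:1107.3667 — 13 statements merged into one kernel-verified Lean document; each statement's English description precedes it below -/
import Mathlib

section
/- Let N(p,q) = |q−p| + |p+q|/2 on ℝ². Let a ≤ b be reals and let u, v be reals with v < u (so the point (u,v) represents the opposite of an interval, a 'negative' element of the completion). Then N(u−a, v−b) ≥ (b−a) + (u−v) > b−a. Consequently, for every ε with 0 < ε ≤ b−a, every point (u,v) in the open N-ball of radius ε centered at (a,b) satisfies u ≤ v (it represents a genuine interval), and moreover every such point satisfies |(v−u)−(b−a)| + |(u+v)/2 − (a+b)/2| < ε. -/
/-- `N(p,q) = |q - p| + |p + q| / 2`. -/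
noncomputable def intervalNorm (p : ℝ × ℝ) : ℝ := |p.2 - p.1| + |p.1 + p.2| / 2

/-- Let `a ≤ b` and let `(u,v)` with `v < u` represent a 'negative' element of
the completion.  Then `N(u-a, v-b) ≥ (b-a) + (u-v) > b-a`.  Consequently, for
`0 < ε ≤ b - a`, every point `(u,v)` of the open `N`-ball of radius `ε`
centered at `(a,b)` satisfies `u ≤ v` (it is a genuine interval) and
`|(v-u) - (b-a)| + |(u+v)/2 - (a+b)/2| < ε`. -/
theorem negative_elements_far_from_intervals (a b : ℝ) (hab : a ≤ b) :
    (∀ u v : ℝ, v < u →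
      (b - a) + (u - v) ≤ intervalNorm (u - a, v - b) ∧
      b - a < (b - a) + (u - v)) ∧
    (∀ ε : ℝ, 0 < ε → ε ≤ b - a → ∀ u v : ℝ, intervalNorm (u - a, v - b) < ε →
      u ≤ v ∧ |(v - u) - (b - a)| + |(u + v) / 2 - (a + b) / 2| < ε) := by
  constructor
  · intro u v h
    unfold intervalNorm
    simp only
    constructor
    · rcases abs_cases ((v - b) - (u - a)) with ⟨h1, _⟩ | ⟨h1, _⟩ <;>
        rcases abs_cases ((u - a) + (v - b)) with ⟨h2, _⟩ | ⟨h2, _⟩ <;> linarith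
    · linarith
  · intro ε hε hεb u v hN
    unfold intervalNorm at hN
    simp only at hN
    have huv : u ≤ v := by
      by_contra hc
      push_neg at hc
      rcases abs_cases ((v - b) - (u - a)) with ⟨h1, _⟩ | ⟨h1, _⟩ <;>
        have h2 := abs_nonneg ((u - a) + (v - b)) <;> linarith
    refine ⟨huv, ?_⟩
    have e1 : |(v - u) - (b - a)| = |(v - b) - (u - a)| := by ring_nf
    have e2 : |(u + v) / 2 - (a + b) / 2| = |(u - a) + (v - b)| / 2 := by
      rw [show (u + v) / 2 - (a + b) / 2 = ((u - a) + (v - b)) / 2 by ring, abs_div]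
      norm_num
    rw [e1, e2]
    linarith
end

section
/- Let 𝒜₄ be ℝ⁴ with standard basis e₁, e₂, e₃, e₄ and the bilinear multiplication determined by: e₁eᵢ = eᵢe₁ = eᵢ for all i; e₂e₂ = e₂; e₂e₃ = e₃e₂ = e₃; e₂e₄ = e₄e₂ = e₃; e₃e₃ = e₂; e₃e₄ = e₄e₃ = e₂; e₄e₄ = e₁. Then this multiplication is associative and commutative, and e₁ is a two-sided unit; hence 𝒜₄ is a 4-dimensional associative, commutative, unital real algebra. -/
/-- The bilinear product on `𝒜₄ = ℝ⁴` determined on the basis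
`e₁, e₂, e₃, e₄` by the table `e₁eᵢ = eᵢe₁ = eᵢ`, `e₂e₂ = e₂`,
`e₂e₃ = e₃e₂ = e₃`, `e₂e₄ = e₄e₂ = e₃`, `e₃e₃ = e₂`, `e₃e₄ = e₄e₃ = e₂`,
`e₄e₄ = e₁`. -/
def mulA4 : (ℝ × ℝ × ℝ × ℝ) → (ℝ × ℝ × ℝ × ℝ) → (ℝ × ℝ × ℝ × ℝ)
  | (x1, x2, x3, x4), (y1, y2, y3, y4) =>
    (x1 * y1 + x4 * y4,
     x1 * y2 + x2 * y1 + x2 * y2 + x3 * y3 + x3 * y4 + x4 * y3,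
     x1 * y3 + x3 * y1 + x2 * y3 + x3 * y2 + x2 * y4 + x4 * y2,
     x1 * y4 + x4 * y1)

def e1A4 : ℝ × ℝ × ℝ × ℝ := (1, 0, 0, 0)
def e2A4 : ℝ × ℝ × ℝ × ℝ := (0, 1, 0, 0)
def e3A4 : ℝ × ℝ × ℝ × ℝ := (0, 0, 1, 0)
def e4A4 : ℝ × ℝ × ℝ × ℝ := (0, 0, 0, 1)

/-- The bilinear multiplication on `ℝ⁴` determined by the table
`e₁eᵢ = eᵢe₁ = eᵢ`, `e₂e₂ = e₂`, `e₂e₃ = e₃e₂ = e₃`, `e₂e₄ = e₄e₂ = e₃`,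
`e₃e₃ = e₂`, `e₃e₄ = e₄e₃ = e₂`, `e₄e₄ = e₁` is associative and commutative,
and `e₁` is a two-sided unit; hence `𝒜₄` is a 4-dimensional associative,
commutative, unital real algebra. -/
theorem A4_assoc_comm_unital :
    (∀ i : ℝ × ℝ × ℝ × ℝ, mulA4 e1A4 i = i ∧ mulA4 i e1A4 = i) ∧
    (mulA4 e2A4 e2A4 = e2A4 ∧ mulA4 e2A4 e3A4 = e3A4 ∧ mulA4 e3A4 e2A4 = e3A4 ∧
      mulA4 e2A4 e4A4 = e3A4 ∧ mulA4 e4A4 e2A4 = e3A4 ∧ mulA4 e3A4 e3A4 = e2A4 ∧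
      mulA4 e3A4 e4A4 = e2A4 ∧ mulA4 e4A4 e3A4 = e2A4 ∧ mulA4 e4A4 e4A4 = e1A4) ∧
    (∀ x y z : ℝ × ℝ × ℝ × ℝ, mulA4 (mulA4 x y) z = mulA4 x (mulA4 y z)) ∧
    (∀ x y : ℝ × ℝ × ℝ × ℝ, mulA4 x y = mulA4 y x) := by
  refine ⟨fun ⟨a, b, c, d⟩ => ⟨by simp [mulA4, e1A4], by simp [mulA4, e1A4]⟩,
    ⟨by simp [mulA4, e2A4], by simp [mulA4, e2A4, e3A4], by simp [mulA4, e2A4, e3A4],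
      by simp [mulA4, e2A4, e3A4, e4A4], by simp [mulA4, e2A4, e3A4, e4A4],
      by simp [mulA4, e2A4, e3A4], by simp [mulA4, e2A4, e3A4, e4A4],
      by simp [mulA4, e2A4, e3A4, e4A4], by simp [mulA4, e1A4, e4A4]⟩,
    fun ⟨a, b, c, d⟩ ⟨p, q, r, s⟩ ⟨u, v, w, t⟩ => by
      simp only [mulA4, Prod.mk.injEq]; refine ⟨by ring, by ring, by ring, by ring⟩,
    fun ⟨a, b, c, d⟩ ⟨p, q, r, s⟩ => by
      simp only [mulA4, Prod.mk.injEq]; refine ⟨by ring, by ring, by ring, by ring⟩⟩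
end

section
/- In the algebra 𝒜₄, set f₁ = e₁ − e₂ and f₄ = e₄ − e₃. Then f₁f₁ = f₁, f₁f₄ = f₄f₁ = f₄, f₄f₄ = f₁, e₂e₂ = e₂, e₂e₃ = e₃e₂ = e₃, e₃e₃ = e₂, and f₁e₂ = f₁e₃ = f₄e₂ = f₄e₃ = 0 (and symmetrically). Consequently 𝒜₄ decomposes as the direct sum of the two ideals I₁ = span{f₁, f₄} and I₂ = span{e₂, e₃}, the unit e₁ of 𝒜₄ equals f₁ + e₂, and in the basis (f₁, e₂, e₃, f₄) the product of x = (x₁,x₂,x₃,x₄) and y = (y₁,y₂,y₃,y₄) is (x₁y₁+x₄y₄, x₂y₂+x₃y₃, x₂y₃+x₃y₂, x₁y₄+x₄y₁). -/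
/-- `f₁ = e₁ - e₂`. -/
def f1A4 : ℝ × ℝ × ℝ × ℝ := e1A4 - e2A4
/-- `f₄ = e₄ - e₃`. -/
def f4A4 : ℝ × ℝ × ℝ × ℝ := e4A4 - e3A4

/-- `I₁ = span{f₁, f₄}`. -/
def I1A4 : Submodule ℝ (ℝ × ℝ × ℝ × ℝ) := Submodule.span ℝ {f1A4, f4A4}
/-- `I₂ = span{e₂, e₃}`. -/
def I2A4 : Submodule ℝ (ℝ × ℝ × ℝ × ℝ) := Submodule.span ℝ {e2A4, e3A4}

def J1A4 : Submodule ℝ (ℝ × ℝ × ℝ × ℝ) where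
  carrier := {p | p.2.1 = -p.1 ∧ p.2.2.1 = -p.2.2.2}
  add_mem' := by rintro ⟨a,b,c,d⟩ ⟨a',b',c',d'⟩ ⟨h1,h2⟩ ⟨h3,h4⟩; simp_all; constructor <;> ring
  zero_mem' := by simp
  smul_mem' := by rintro r ⟨a,b,c,d⟩ ⟨h1,h2⟩; simp_all

def J2A4 : Submodule ℝ (ℝ × ℝ × ℝ × ℝ) where
  carrier := {p | p.1 = 0 ∧ p.2.2.2 = 0}
  add_mem' := by rintro ⟨a,b,c,d⟩ ⟨a',b',c',d'⟩ ⟨h1,h2⟩ ⟨h3,h4⟩; simp_all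
  zero_mem' := by simp
  smul_mem' := by rintro r ⟨a,b,c,d⟩ ⟨h1,h2⟩; simp_all

lemma I1_eq : I1A4 = J1A4 := by
  apply le_antisymm
  · rw [I1A4, Submodule.span_le]
    rintro x (rfl | rfl) <;> simp [J1A4, f1A4, f4A4, e1A4, e2A4, e3A4, e4A4]
  · rintro ⟨a,b,c,d⟩ ⟨h1,h2⟩
    simp only at h1 h2
    subst h1; subst h2
    have : ((a, -a, -d, d) : ℝ × ℝ × ℝ × ℝ) = a • f1A4 + d • f4A4 := by
      simp [f1A4, f4A4, e1A4, e2A4, e3A4, e4A4, Prod.ext_iff]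
    rw [this]
    exact add_mem (Submodule.smul_mem _ _ (Submodule.subset_span (by simp)))
      (Submodule.smul_mem _ _ (Submodule.subset_span (by simp)))

lemma I2_eq : I2A4 = J2A4 := by
  apply le_antisymm
  · rw [I2A4, Submodule.span_le]
    rintro x (rfl | rfl) <;> simp [J2A4, e2A4, e3A4]
  · rintro ⟨a,b,c,d⟩ ⟨h1,h2⟩
    simp only at h1 h2
    subst h1; subst h2
    have : ((0, b, c, 0) : ℝ × ℝ × ℝ × ℝ) = b • e2A4 + c • e3A4 := by
      simp [e2A4, e3A4, Prod.ext_iff]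
    rw [this]
    exact add_mem (Submodule.smul_mem _ _ (Submodule.subset_span (by simp)))
      (Submodule.smul_mem _ _ (Submodule.subset_span (by simp)))

/-- With `f₁ = e₁ - e₂` and `f₄ = e₄ - e₃` one has `f₁f₁ = f₁`,
`f₁f₄ = f₄f₁ = f₄`, `f₄f₄ = f₁`, `e₂e₂ = e₂`, `e₂e₃ = e₃e₂ = e₃`, `e₃e₃ = e₂`,
and `f₁e₂ = f₁e₃ = f₄e₂ = f₄e₃ = 0` (symmetrically).  Consequently `𝒜₄` is the
direct sum of the two ideals `I₁ = span{f₁,f₄}` and `I₂ = span{e₂,e₃}`, the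
unit satisfies `e₁ = f₁ + e₂`, and in the basis `(f₁, e₂, e₃, f₄)` the product
of `(x₁,x₂,x₃,x₄)` and `(y₁,y₂,y₃,y₄)` is
`(x₁y₁+x₄y₄, x₂y₂+x₃y₃, x₂y₃+x₃y₂, x₁y₄+x₄y₁)`. -/
theorem A4_ideal_decomposition :
    (mulA4 f1A4 f1A4 = f1A4 ∧ mulA4 f1A4 f4A4 = f4A4 ∧ mulA4 f4A4 f1A4 = f4A4 ∧
      mulA4 f4A4 f4A4 = f1A4 ∧ mulA4 e2A4 e2A4 = e2A4 ∧ mulA4 e2A4 e3A4 = e3A4 ∧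
      mulA4 e3A4 e2A4 = e3A4 ∧ mulA4 e3A4 e3A4 = e2A4) ∧
    (mulA4 f1A4 e2A4 = 0 ∧ mulA4 f1A4 e3A4 = 0 ∧ mulA4 f4A4 e2A4 = 0 ∧
      mulA4 f4A4 e3A4 = 0 ∧ mulA4 e2A4 f1A4 = 0 ∧ mulA4 e3A4 f1A4 = 0 ∧
      mulA4 e2A4 f4A4 = 0 ∧ mulA4 e3A4 f4A4 = 0) ∧
    (∀ x ∈ I1A4, ∀ y : ℝ × ℝ × ℝ × ℝ, mulA4 y x ∈ I1A4 ∧ mulA4 x y ∈ I1A4) ∧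
    (∀ x ∈ I2A4, ∀ y : ℝ × ℝ × ℝ × ℝ, mulA4 y x ∈ I2A4 ∧ mulA4 x y ∈ I2A4) ∧
    I1A4 ⊔ I2A4 = ⊤ ∧ I1A4 ⊓ I2A4 = ⊥ ∧
    e1A4 = f1A4 + e2A4 ∧
    (∀ x1 x2 x3 x4 y1 y2 y3 y4 : ℝ,
      mulA4 (x1 • f1A4 + x2 • e2A4 + x3 • e3A4 + x4 • f4A4)
            (y1 • f1A4 + y2 • e2A4 + y3 • e3A4 + y4 • f4A4) =
        (x1 * y1 + x4 * y4) • f1A4 + (x2 * y2 + x3 * y3) • e2A4 +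
          (x2 * y3 + x3 * y2) • e3A4 + (x1 * y4 + x4 * y1) • f4A4) := by
  refine ⟨⟨?_, ?_, ?_, ?_, ?_, ?_, ?_, ?_⟩, ⟨?_, ?_, ?_, ?_, ?_, ?_, ?_, ?_⟩,
    ?_, ?_, ?_, ?_, ?_, ?_⟩
  all_goals try (simp [mulA4, f1A4, f4A4, e1A4, e2A4, e3A4, e4A4, Prod.ext_iff]; done)
  · rw [I1_eq]
    rintro ⟨a,b,c,d⟩ ⟨h1,h2⟩ ⟨p,q,r,s⟩
    simp only at h1 h2
    subst h1; subst h2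
    constructor <;> exact ⟨by simp [mulA4]; ring, by simp [mulA4]; ring⟩
  · rw [I2_eq]
    rintro ⟨a,b,c,d⟩ ⟨h1,h2⟩ ⟨p,q,r,s⟩
    simp only at h1 h2
    subst h1; subst h2
    constructor <;> exact ⟨by simp [mulA4], by simp [mulA4]⟩
  · rw [I1_eq, I2_eq, eq_top_iff]
    rintro ⟨a,b,c,d⟩ -
    rw [Submodule.mem_sup]
    exact ⟨(a, -a, -d, d), ⟨rfl, rfl⟩, (0, b + a, c + d, 0), ⟨rfl, rfl⟩,
      by simp only [Prod.ext_iff, Prod.mk_add_mk]; and_intros <;> ring⟩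
  · rw [I1_eq, I2_eq, eq_bot_iff]
    rintro ⟨a,b,c,d⟩ ⟨⟨h1,h2⟩,⟨h3,h4⟩⟩
    simp_all [Prod.ext_iff]
  · intro x1 x2 x3 x4 y1 y2 y3 y4
    simp [mulA4, f1A4, f4A4, e1A4, e2A4, e3A4, e4A4, Prod.ext_iff]
    and_intros <;> ring
end

section
/- Let 0 ≤ a ≤ b and 0 ≤ c ≤ d be reals. Then the Minkowski product {xy : x ∈ [a,b], y ∈ [c,d]} equals the interval [ac, bd], and in the algebra 𝒜₄ one has φ([a,b])·φ([c,d]) = (a, b−a, 0, 0)·(c, d−c, 0, 0) = (ac, bd−ac, 0, 0) = φ([ac, bd]). Hence the 𝒜₄-product of two intervals of nonnegative numbers coincides with their Minkowski product. -/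
/-- The piecewise embedding of the interval `[a,b]` (for `a ≤ b`) into `𝒜₄`:
`φ([a,b]) = (a, b-a, 0, 0)` if `0 ≤ a`, `(0, b, -a, 0)` if `a ≤ 0 ≤ b`, and
`(0, 0, b-a, -b)` if `b ≤ 0`. -/
noncomputable def phiA4 (a b : ℝ) : ℝ × ℝ × ℝ × ℝ :=
  if 0 ≤ a then (a, b - a, 0, 0)
  else if 0 ≤ b then (0, b, -a, 0)
  else (0, 0, b - a, -b)

/-- The Minkowski product of two sets of reals. -/
def minkMul (X Y : Set ℝ) : Set ℝ := Set.image2 (· * ·) X Y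

/-- For `0 ≤ a ≤ b` and `0 ≤ c ≤ d`, the Minkowski product
`{xy : x ∈ [a,b], y ∈ [c,d]}` equals `[ac, bd]`, and in `𝒜₄`,
`φ([a,b])·φ([c,d]) = (a,b-a,0,0)·(c,d-c,0,0) = (ac, bd-ac, 0, 0) = φ([ac,bd])`:
the `𝒜₄`-product of two nonnegative intervals is their Minkowski product. -/
theorem A4_product_nonneg_nonneg (a b c d : ℝ)
    (ha : 0 ≤ a) (hab : a ≤ b) (hc : 0 ≤ c) (hcd : c ≤ d) :
    minkMul (Set.Icc a b) (Set.Icc c d) = Set.Icc (a * c) (b * d) ∧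
    phiA4 a b = (a, b - a, 0, 0) ∧
    phiA4 c d = (c, d - c, 0, 0) ∧
    mulA4 (phiA4 a b) (phiA4 c d) = (a * c, b * d - a * c, 0, 0) ∧
    mulA4 (phiA4 a b) (phiA4 c d) = phiA4 (a * c) (b * d) := by
  have hb : 0 ≤ b := ha.trans hab
  have hd : 0 ≤ d := hc.trans hcd
  have hmink : minkMul (Set.Icc a b) (Set.Icc c d) = Set.Icc (a * c) (b * d) := by
    apply Set.Subset.antisymm
    · rintro z ⟨x, ⟨hax, hxb⟩, y, ⟨hcy, hyd⟩, rfl⟩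
      exact ⟨mul_le_mul hax hcy hc (ha.trans hax),
             mul_le_mul hxb hyd (hc.trans hcy) hb⟩
    · rintro x ⟨hacx, hxbd⟩
      have hx0 : 0 ≤ x := (mul_nonneg ha hc).trans hacx
      by_cases hbc : b * c ≤ x
      · rcases hb.lt_or_eq with hb0 | hb0
        swap
        · have hx : x = 0 := le_antisymm (by nlinarith) hx0
          exact ⟨b, ⟨hab, le_refl b⟩, c, ⟨le_refl c, hcd⟩, by rw [← hb0, hx]; ring⟩
        refine ⟨b, ⟨hab, le_refl b⟩, x / b, ⟨?_, ?_⟩, by field_simp⟩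
        · rw [le_div_iff₀ hb0]; linarith [hbc]
        · rw [div_le_iff₀ hb0]; linarith [hxbd]
      · push_neg at hbc
        have hc0 : 0 < c := by
          by_contra h
          push_neg at h
          have : c = 0 := le_antisymm h hc
          rw [this] at hbc; simp at hbc; linarith
        refine ⟨x / c, ⟨?_, ?_⟩, c, ⟨le_refl c, hcd⟩, by field_simp⟩
        · rw [le_div_iff₀ hc0]; linarith [hacx]
        · rw [div_le_iff₀ hc0]; linarith [hbc.le]
  have hphi1 : phiA4 a b = (a, b - a, 0, 0) := by simp [phiA4, ha]
  have hphi2 : phiA4 c d = (c, d - c, 0, 0) := by simp [phiA4, hc]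
  have hprod : mulA4 (phiA4 a b) (phiA4 c d) = (a * c, b * d - a * c, 0, 0) := by
    rw [hphi1, hphi2]; simp [mulA4]; ring
  refine ⟨hmink, hphi1, hphi2, hprod, ?_⟩
  rw [hprod]
  simp [phiA4, mul_nonneg ha hc]
end

section
/- Let 0 ≤ a ≤ b and c ≤ 0 ≤ d be reals. Then the Minkowski product {xy : x ∈ [a,b], y ∈ [c,d]} equals the interval [bc, bd], and in the algebra 𝒜₄ one has φ([a,b])·φ([c,d]) = (a, b−a, 0, 0)·(0, d, −c, 0) = (0, bd, −bc, 0) = φ([bc, bd]). Hence the 𝒜₄-product of an interval of nonnegative numbers with an interval containing 0 coincides with their Minkowski product (and is independent of a). -/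
/-- For `0 ≤ a ≤ b` and `c ≤ 0 ≤ d`, the Minkowski product
`{xy : x ∈ [a,b], y ∈ [c,d]}` equals `[bc, bd]`, and in `𝒜₄`,
`φ([a,b])·φ([c,d]) = (a,b-a,0,0)·(0,d,-c,0) = (0, bd, -bc, 0) = φ([bc,bd])`:
the `𝒜₄`-product of a nonnegative interval with an interval containing `0`
is their Minkowski product (independent of `a`). -/
theorem A4_product_nonneg_zero (a b c d : ℝ)
    (ha : 0 ≤ a) (hab : a ≤ b) (hc : c ≤ 0) (hd : 0 ≤ d) :
    minkMul (Set.Icc a b) (Set.Icc c d) = Set.Icc (b * c) (b * d) ∧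
    phiA4 a b = (a, b - a, 0, 0) ∧
    phiA4 c d = (0, d, -c, 0) ∧
    mulA4 (phiA4 a b) (phiA4 c d) = (0, b * d, -(b * c), 0) ∧
    mulA4 (phiA4 a b) (phiA4 c d) = phiA4 (b * c) (b * d) := by
  have hb : 0 ≤ b := le_trans ha hab
  have hphi1 : phiA4 a b = (a, b - a, 0, 0) := by simp [phiA4, ha]
  have hphi2 : phiA4 c d = (0, d, -c, 0) := by
    unfold phiA4
    rcases lt_or_ge c 0 with h | h
    · simp [not_le.mpr h, hd]
    · have hc0 : c = 0 := le_antisymm hc h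
      simp [hc0]
  have hmul : mulA4 (phiA4 a b) (phiA4 c d) = (0, b * d, -(b * c), 0) := by
    rw [hphi1, hphi2]; simp [mulA4]; constructor <;> ring
  refine ⟨?_, hphi1, hphi2, hmul, ?_⟩
  · ext t
    simp only [minkMul, Set.mem_image2, Set.mem_Icc]
    constructor
    · rintro ⟨x, ⟨hx1, hx2⟩, y, ⟨hy1, hy2⟩, rfl⟩
      have hx0 : 0 ≤ x := le_trans ha hx1
      constructor <;> nlinarith
    · rintro ⟨h1, h2⟩
      rcases eq_or_lt_of_le hb with hb0 | hb0
      · refine ⟨a, ⟨le_refl a, hab⟩, 0, ⟨hc, hd⟩, ?_⟩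
        have : a = 0 := le_antisymm (hb0 ▸ hab) ha
        simp [this]
        nlinarith
      · refine ⟨b, ⟨hab, le_refl b⟩, t / b, ⟨?_, ?_⟩, ?_⟩
        · rw [le_div_iff₀ hb0]; linarith [h1]
        · rw [div_le_iff₀ hb0]; linarith [h2]
        · field_simp
  · rw [hmul]
    unfold phiA4
    have hbc : b * c ≤ 0 := mul_nonpos_of_nonneg_of_nonpos hb hc
    have hbd : 0 ≤ b * d := mul_nonneg hb hd
    rcases lt_or_ge (b * c) 0 with h | h
    · simp [not_le.mpr h, hbd]
    · have : b * c = 0 := le_antisymm hbc h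
      simp [this]
end

section
/- Let 0 ≤ a ≤ b and c ≤ d ≤ 0 be reals. Then the Minkowski product {xy : x ∈ [a,b], y ∈ [c,d]} equals the interval [bc, ad], and in the algebra 𝒜₄ one has φ([a,b])·φ([c,d]) = (a, b−a, 0, 0)·(0, 0, d−c, −d) = (0, 0, ad−bc, −ad) = φ([bc, ad]). Hence the 𝒜₄-product of an interval of nonnegative numbers with an interval of nonpositive numbers coincides with their Minkowski product. -/
/-- For `0 ≤ a ≤ b` and `c ≤ d ≤ 0`, the Minkowski product
`{xy : x ∈ [a,b], y ∈ [c,d]}` equals `[bc, ad]`, and in `𝒜₄`,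
`φ([a,b])·φ([c,d]) = (a,b-a,0,0)·(0,0,d-c,-d) = (0, 0, ad-bc, -ad) = φ([bc,ad])`:
the `𝒜₄`-product of a nonnegative interval with a nonpositive interval
is their Minkowski product. -/
theorem A4_product_nonneg_nonpos (a b c d : ℝ)
    (ha : 0 ≤ a) (hab : a ≤ b) (hcd : c ≤ d) (hd : d ≤ 0) :
    minkMul (Set.Icc a b) (Set.Icc c d) = Set.Icc (b * c) (a * d) ∧
    phiA4 a b = (a, b - a, 0, 0) ∧
    phiA4 c d = (0, 0, d - c, -d) ∧
    mulA4 (phiA4 a b) (phiA4 c d) = (0, 0, a * d - b * c, -(a * d)) ∧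
    mulA4 (phiA4 a b) (phiA4 c d) = phiA4 (b * c) (a * d) := by

  have hb : 0 ≤ b := ha.trans hab
  have hc : c ≤ 0 := hcd.trans hd
  have hphi1 : phiA4 a b = (a, b - a, 0, 0) := by simp [phiA4, ha]
  have hphi2 : phiA4 c d = (0, 0, d - c, -d) := by
    unfold phiA4
    split_ifs with h1 h2
    · have hc0 : c = 0 := le_antisymm hc h1
      have hd0 : d = 0 := le_antisymm hd (h1.trans hcd)
      simp [hc0, hd0]
    · have hd0 : d = 0 := le_antisymm hd h2
      simp [hd0]
    · rfl
  have hmul : mulA4 (phiA4 a b) (phiA4 c d) = (0, 0, a * d - b * c, -(a * d)) := by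
    rw [hphi1, hphi2]
    simp only [mulA4]
    refine Prod.ext (by ring) (Prod.ext (by ring) (Prod.ext (by ring) (by ring)))
  refine ⟨?_, hphi1, hphi2, hmul, ?_⟩
  · ext t
    simp only [minkMul, Set.mem_image2, Set.mem_Icc]
    constructor
    · rintro ⟨x, ⟨hax, hxb⟩, y, ⟨hcy, hyd⟩, rfl⟩
      constructor
      · calc b * c ≤ b * y := mul_le_mul_of_nonneg_left hcy hb
          _ ≤ x * y := by nlinarith
      · calc x * y ≤ x * d := mul_le_mul_of_nonneg_left hyd (ha.trans hax)
          _ ≤ a * d := by nlinarith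
    · rintro ⟨h1, h2⟩
      rcases eq_or_lt_of_le hb with hb0 | hb0
      · have ha0 : a = 0 := le_antisymm (hab.trans hb0.symm.le) ha
        have ht : t = 0 := le_antisymm (by simpa [ha0] using h2) (by simpa [← hb0] using h1)
        exact ⟨0, ⟨ha0.le, hb0.le⟩, d, ⟨hcd, le_refl d⟩, by simp [ht]⟩
      · rcases le_or_gt t (b * d) with htbd | htbd
        · refine ⟨b, ⟨hab, le_refl b⟩, t / b, ⟨?_, ?_⟩, by field_simp⟩
          · rw [le_div_iff₀ hb0]; linarith [h1]
          · rw [div_le_iff₀ hb0]; linarith [htbd]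
        · have hd0 : d < 0 := by
            rcases eq_or_lt_of_le hd with h | h
            · exfalso; nlinarith
            · exact h
          refine ⟨t / d, ⟨?_, ?_⟩, d, ⟨hcd, le_refl d⟩, by field_simp [hd0.ne]⟩
          · rw [le_div_iff_of_neg hd0]; linarith [h2]
          · rw [div_le_iff_of_neg hd0]; linarith [htbd]
  · rw [hmul]
    have hbc : b * c ≤ 0 := mul_nonpos_of_nonneg_of_nonpos hb hc
    have had : a * d ≤ 0 := mul_nonpos_of_nonneg_of_nonpos ha hd
    unfold phiA4
    split_ifs with h1 h2
    · have h1' : b * c = 0 := le_antisymm hbc h1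
      have h2' : a * d = 0 := le_antisymm had (by nlinarith)
      simp [h1', h2']
    · have h2' : a * d = 0 := le_antisymm had h2
      simp [h2']
    · rfl
end

section
/- Let a ≤ 0 ≤ b and c ≤ d ≤ 0 be reals. Then the Minkowski product {xy : x ∈ [a,b], y ∈ [c,d]} equals the interval [bc, ac], and in the algebra 𝒜₄ one has φ([a,b])·φ([c,d]) = (0, b, −a, 0)·(0, 0, d−c, −d) = (0, ac, −bc, 0) = φ([bc, ac]). Hence the 𝒜₄-product of an interval containing 0 with an interval of nonpositive numbers coincides with their Minkowski product. -/
/-- For `a ≤ 0 ≤ b` and `c ≤ d ≤ 0`, the Minkowski product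
`{xy : x ∈ [a,b], y ∈ [c,d]}` equals `[bc, ac]`, and in `𝒜₄`,
`φ([a,b])·φ([c,d]) = (0,b,-a,0)·(0,0,d-c,-d) = (0, ac, -bc, 0) = φ([bc,ac])`:
the `𝒜₄`-product of an interval containing `0` with a nonpositive interval
is their Minkowski product. -/
theorem A4_product_zero_nonpos (a b c d : ℝ)
    (ha : a ≤ 0) (hb : 0 ≤ b) (hcd : c ≤ d) (hd : d ≤ 0) :
    minkMul (Set.Icc a b) (Set.Icc c d) = Set.Icc (b * c) (a * c) ∧
    phiA4 a b = (0, b, -a, 0) ∧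
    phiA4 c d = (0, 0, d - c, -d) ∧
    mulA4 (phiA4 a b) (phiA4 c d) = (0, a * c, -(b * c), 0) ∧
    mulA4 (phiA4 a b) (phiA4 c d) = phiA4 (b * c) (a * c) := by
  have hc0 : c ≤ 0 := hcd.trans hd
  have hab : phiA4 a b = (0, b, -a, 0) := by
    unfold phiA4
    rcases le_or_gt 0 a with h | h
    · have : a = 0 := le_antisymm ha h
      subst this; simp
    · rw [if_neg (not_le.mpr h), if_pos hb]
  have hcd' : phiA4 c d = (0, 0, d - c, -d) := by
    unfold phiA4
    rcases le_or_gt 0 c with h | h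
    · have hc : c = 0 := le_antisymm hc0 h
      have hd0 : d = 0 := le_antisymm hd (hc ▸ hcd)
      subst hc; subst hd0; simp
    · rw [if_neg (not_le.mpr h)]
      rcases le_or_gt 0 d with h2 | h2
      · have hd0 : d = 0 := le_antisymm hd h2
        subst hd0; simp
      · rw [if_neg (not_le.mpr h2)]
  have hmul : mulA4 (phiA4 a b) (phiA4 c d) = (0, a * c, -(b * c), 0) := by
    rw [hab, hcd']
    show ((0:ℝ) * 0 + 0 * -d, _, _, _) = _
    norm_num
    constructor <;> ring
  refine ⟨?_, hab, hcd', hmul, ?_⟩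
  · ext t
    simp only [minkMul, Set.mem_image2, Set.mem_Icc]
    constructor
    · rintro ⟨x, ⟨hx1, hx2⟩, y, ⟨hy1, hy2⟩, rfl⟩
      constructor
      · nlinarith
      · nlinarith
    · rintro ⟨h1, h2⟩
      rcases eq_or_lt_of_le hc0 with hc | hc
      · have hd0 : d = 0 := le_antisymm hd (hc ▸ hcd)
        have ht : t = 0 := le_antisymm (by nlinarith) (by nlinarith)
        exact ⟨0, ⟨ha, hb⟩, 0, ⟨hc.le, hd0.ge⟩, by simp [ht]⟩
      · refine ⟨t / c, ⟨?_, ?_⟩, c, ⟨le_refl c, hcd⟩, div_mul_cancel₀ t hc.ne⟩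
        · rw [le_div_iff_of_neg hc]; nlinarith
        · rw [div_le_iff_of_neg hc]; nlinarith
  · rw [hmul]
    unfold phiA4
    rcases le_or_gt 0 (b * c) with h | h
    · have hbc : b * c = 0 := le_antisymm (mul_nonpos_of_nonneg_of_nonpos hb hc0) h
      rw [if_pos h, hbc]; norm_num
    · rw [if_neg (not_le.mpr h), if_pos (by nlinarith : (0:ℝ) ≤ a * c)]
end

section
/- Let a ≤ b ≤ 0 and c ≤ d ≤ 0 be reals. Then the Minkowski product {xy : x ∈ [a,b], y ∈ [c,d]} equals the interval [bd, ac], and in the algebra 𝒜₄ one has φ([a,b])·φ([c,d]) = (0, 0, b−a, −b)·(0, 0, d−c, −d) = (bd, ac−bd, 0, 0) = φ([bd, ac]). Hence the 𝒜₄-product of two intervals of nonpositive numbers coincides with their Minkowski product. -/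
lemma aux_nonneg (p q r s : ℝ) (h0p : 0 ≤ p) (hpq : p ≤ q) (h0r : 0 ≤ r) (hrs : r ≤ s) :
    Set.image2 (· * ·) (Set.Icc p q) (Set.Icc r s) = Set.Icc (p * r) (q * s) := by
  ext t
  constructor
  · rintro ⟨x, ⟨hx1, hx2⟩, y, ⟨hy1, hy2⟩, rfl⟩
    exact ⟨mul_le_mul hx1 hy1 h0r (le_trans h0p hx1),
           mul_le_mul hx2 hy2 (le_trans h0r hy1) (le_trans h0p hpq)⟩
  · rintro ⟨ht1, ht2⟩
    rcases le_or_gt s 0 with hs | hs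
    · have hs0 : s = 0 := le_antisymm hs (le_trans h0r hrs)
      have hr0 : r = 0 := le_antisymm (hs0 ▸ hrs) h0r
      have ht0 : t = 0 := by nlinarith
      exact ⟨p, ⟨le_refl p, hpq⟩, 0, ⟨by rw [hr0], by linarith⟩, by rw [ht0]; ring⟩
    · have ht0 : 0 ≤ t := le_trans (mul_nonneg h0p h0r) ht1
      set x := max p (t / s) with hx
      have hxq : x ≤ q := max_le hpq (by rw [div_le_iff₀ hs]; nlinarith)
      have hpx : p ≤ x := le_max_left _ _
      rcases eq_or_lt_of_le (le_trans h0p hpx) with hx0 | hx0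
      · -- x = 0, so p = 0 and t/s ≤ 0, hence t = 0
        have hts : t / s ≤ 0 := le_of_max_le_right (le_of_eq hx0.symm)
        have : t ≤ 0 := by
          by_contra h
          push_neg at h
          exact absurd hts (not_le.mpr (div_pos h hs))
        have ht0' : t = 0 := le_antisymm this ht0
        refine ⟨0, ⟨by linarith [hx0 ▸ hpx], by linarith [hx0 ▸ hxq]⟩, r, ⟨le_refl r, hrs⟩, by
          rw [ht0']; ring⟩
      · refine ⟨x, ⟨hpx, hxq⟩, t / x, ⟨?_, ?_⟩, by field_simp⟩
        · rw [le_div_iff₀ hx0]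
          rcases max_cases p (t / s) with ⟨hm, _⟩ | ⟨hm, _⟩
          · rw [hx, hm]; nlinarith
          · rw [hx, hm]
            have hst : s * (t / s) = t := by field_simp
            have h2 := mul_le_mul_of_nonneg_right hrs (div_nonneg ht0 hs.le)
            nlinarith
        · rw [div_le_iff₀ hx0]
          have hts : t / s ≤ x := le_max_right _ _
          have hst : s * (t / s) = t := by field_simp
          have h2 := mul_le_mul_of_nonneg_left hts hs.le
          nlinarith

lemma phi_nonpos (a b : ℝ) (hab : a ≤ b) (hb : b ≤ 0) :
    phiA4 a b = (0, 0, b - a, -b) := by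
  unfold phiA4
  split_ifs with h1 h2
  · have ha0 : a = 0 := le_antisymm (le_trans hab hb) h1
    have hb0 : b = 0 := le_antisymm hb (ha0 ▸ hab)
    simp [ha0, hb0]
  · have hb0 : b = 0 := le_antisymm hb h2
    simp [hb0]
  · rfl

/-- For `a ≤ b ≤ 0` and `c ≤ d ≤ 0`, the Minkowski product
`{xy : x ∈ [a,b], y ∈ [c,d]}` equals `[bd, ac]`, and in `𝒜₄`,
`φ([a,b])·φ([c,d]) = (0,0,b-a,-b)·(0,0,d-c,-d) = (bd, ac-bd, 0, 0) = φ([bd,ac])`: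
the `𝒜₄`-product of two nonpositive intervals is their Minkowski product. -/
theorem A4_product_nonpos_nonpos (a b c d : ℝ)
    (hab : a ≤ b) (hb : b ≤ 0) (hcd : c ≤ d) (hd : d ≤ 0) :
    minkMul (Set.Icc a b) (Set.Icc c d) = Set.Icc (b * d) (a * c) ∧
    phiA4 a b = (0, 0, b - a, -b) ∧
    phiA4 c d = (0, 0, d - c, -d) ∧
    mulA4 (phiA4 a b) (phiA4 c d) = (b * d, a * c - b * d, 0, 0) ∧
    mulA4 (phiA4 a b) (phiA4 c d) = phiA4 (b * d) (a * c) := by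
  have hpab := phi_nonpos a b hab hb
  have hpcd := phi_nonpos c d hcd hd
  have hmul : mulA4 (phiA4 a b) (phiA4 c d) = (b * d, a * c - b * d, 0, 0) := by
    rw [hpab, hpcd]; unfold mulA4; norm_num; ring
  have hbd : 0 ≤ b * d := by nlinarith
  refine ⟨?_, hpab, hpcd, hmul, ?_⟩
  · -- Minkowski product
    have key := aux_nonneg (-b) (-a) (-d) (-c) (by linarith) (by linarith) (by linarith)
      (by linarith)
    have him : minkMul (Set.Icc a b) (Set.Icc c d)
        = Set.image2 (· * ·) (Set.Icc (-b) (-a)) (Set.Icc (-d) (-c)) := by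
      unfold minkMul
      ext t
      constructor
      · rintro ⟨x, ⟨hx1, hx2⟩, y, ⟨hy1, hy2⟩, rfl⟩
        exact ⟨-x, ⟨by linarith, by linarith⟩, -y, ⟨by linarith, by linarith⟩, by ring⟩
      · rintro ⟨x, ⟨hx1, hx2⟩, y, ⟨hy1, hy2⟩, rfl⟩
        exact ⟨-x, ⟨by linarith, by linarith⟩, -y, ⟨by linarith, by linarith⟩, by ring⟩
    rw [him, key]
    congr 1 <;> ring_nf
  · rw [hmul]
    unfold phiA4
    rw [if_pos hbd]
end

section
/- Let a ≤ 0 ≤ b and c ≤ 0 ≤ d be reals. Then in the algebra 𝒜₄ one has φ([a,b])·φ([c,d]) = (0, b, −a, 0)·(0, d, −c, 0) = (0, bd+ac, −(bc+ad), 0) = φ([bc+ad, bd+ac]), and the resulting interval contains the Minkowski product: for all x ∈ [a,b] and y ∈ [c,d], bc+ad ≤ xy ≤ bd+ac. -/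
/-- For `a ≤ 0 ≤ b` and `c ≤ 0 ≤ d`, in `𝒜₄` one has
`φ([a,b])·φ([c,d]) = (0,b,-a,0)·(0,d,-c,0) = (0, bd+ac, -(bc+ad), 0)
 = φ([bc+ad, bd+ac])`, and the resulting interval contains the Minkowski
product: `bc+ad ≤ xy ≤ bd+ac` for all `x ∈ [a,b]`, `y ∈ [c,d]`. -/
theorem A4_product_zero_zero (a b c d : ℝ)
    (ha : a ≤ 0) (hb : 0 ≤ b) (hc : c ≤ 0) (hd : 0 ≤ d) :
    phiA4 a b = (0, b, -a, 0) ∧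
    phiA4 c d = (0, d, -c, 0) ∧
    mulA4 (phiA4 a b) (phiA4 c d) = (0, b * d + a * c, -(b * c + a * d), 0) ∧
    mulA4 (phiA4 a b) (phiA4 c d) = phiA4 (b * c + a * d) (b * d + a * c) ∧
    (∀ x ∈ Set.Icc a b, ∀ y ∈ Set.Icc c d,
      b * c + a * d ≤ x * y ∧ x * y ≤ b * d + a * c) := by
  have key : ∀ u v : ℝ, u ≤ 0 → 0 ≤ v → phiA4 u v = (0, v, -u, 0) := by
    intro u v hu hv
    unfold phiA4
    split_ifs with h
    · have : u = 0 := le_antisymm hu h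
      simp [this]
    · rfl
  have h1 := key a b ha hb
  have h2 := key c d hc hd
  refine ⟨h1, h2, ?_, ?_, ?_⟩
  · rw [h1, h2]; simp [mulA4]; ring_nf
  · rw [h1, h2, key (b*c+a*d) (b*d+a*c) (by nlinarith) (by nlinarith)]
    simp [mulA4]; ring_nf
  · rintro x ⟨hx1, hx2⟩ y ⟨hy1, hy2⟩
    rcases le_or_gt 0 y with h | h
    · constructor
      · nlinarith [mul_nonneg (sub_nonneg.2 hx1) h,
          mul_nonneg (neg_nonneg.2 ha) (sub_nonneg.2 hy2),
          mul_nonpos_of_nonneg_of_nonpos hb hc]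
      · nlinarith [mul_nonneg (sub_nonneg.2 hx2) h,
          mul_nonneg hb (sub_nonneg.2 hy2),
          mul_nonneg (neg_nonneg.2 ha) (neg_nonneg.2 hc)]
    · constructor
      · nlinarith [mul_nonneg (sub_nonneg.2 hx2) (neg_nonneg.2 h.le),
          mul_nonneg hb (sub_nonneg.2 hy1),
          mul_nonpos_of_nonpos_of_nonneg ha hd]
      · nlinarith [mul_nonneg (sub_nonneg.2 hx1) (neg_nonneg.2 h.le),
          mul_nonneg (neg_nonneg.2 ha) (sub_nonneg.2 hy1),
          mul_nonneg hb hd]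
end

section
/- Monotony property: let c ≤ a ≤ 0 ≤ b ≤ d (so [a,b] ⊆ [c,d] and both intervals contain 0) and let z = z₁e₁ + z₂e₂ + z₃e₃ + z₄e₄ ∈ 𝒜₄ with z₁, z₂, z₃, z₄ ≥ 0. Then in 𝒜₄, φ([a,b])·z = (0, bz₁+bz₂−az₃−az₄, bz₃+bz₄−az₁−az₂, 0) and φ([c,d])·z = (0, dz₁+dz₂−cz₃−cz₄, dz₃+dz₄−cz₁−cz₂, 0), and componentwise bz₁+bz₂−az₃−az₄ ≤ dz₁+dz₂−cz₃−cz₄ and bz₃+bz₄−az₁−az₂ ≤ dz₃+dz₄−cz₁−cz₂; that is, the interval [−(bz₃+bz₄−az₁−az₂), bz₁+bz₂−az₃−az₄] represented by φ([a,b])·z is contained in the interval [−(dz₃+dz₄−cz₁−cz₂), dz₁+dz₂−cz₃−cz₄] represented by φ([c,d])·z. -/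

lemma mulA4_phi (a b z1 z2 z3 z4 : ℝ) (ha : a ≤ 0) (hb : 0 ≤ b) :
    mulA4 (phiA4 a b) (z1, z2, z3, z4) =
      (0, b * z1 + b * z2 - a * z3 - a * z4, b * z3 + b * z4 - a * z1 - a * z2, 0) := by
  unfold phiA4
  rcases le_or_gt 0 a with h | h
  · have : a = 0 := le_antisymm ha h
    subst this
    simp only [le_refl, if_true]
    simp only [mulA4, Prod.mk.injEq]; refine ⟨by ring, by ring, by ring, by ring⟩
  · rw [if_neg (not_le.mpr h), if_pos hb]
    simp only [mulA4, Prod.mk.injEq]; refine ⟨by ring, by ring, by ring, by ring⟩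

/-- Monotony property: for `c ≤ a ≤ 0 ≤ b ≤ d` (so `[a,b] ⊆ [c,d]`, both
containing `0`) and `z = (z₁,z₂,z₃,z₄) ∈ 𝒜₄` with nonnegative coordinates,
`φ([a,b])·z = (0, bz₁+bz₂-az₃-az₄, bz₃+bz₄-az₁-az₂, 0)` and
`φ([c,d])·z = (0, dz₁+dz₂-cz₃-cz₄, dz₃+dz₄-cz₁-cz₂, 0)`, the components are
dominated componentwise, and the interval represented by `φ([a,b])·z` is
contained in the one represented by `φ([c,d])·z`. -/
theorem A4_monotony (a b c d z1 z2 z3 z4 : ℝ)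
    (hca : c ≤ a) (ha : a ≤ 0) (hb : 0 ≤ b) (hbd : b ≤ d)
    (hz1 : 0 ≤ z1) (hz2 : 0 ≤ z2) (hz3 : 0 ≤ z3) (hz4 : 0 ≤ z4) :
    mulA4 (phiA4 a b) (z1, z2, z3, z4) =
      (0, b * z1 + b * z2 - a * z3 - a * z4, b * z3 + b * z4 - a * z1 - a * z2, 0) ∧
    mulA4 (phiA4 c d) (z1, z2, z3, z4) =
      (0, d * z1 + d * z2 - c * z3 - c * z4, d * z3 + d * z4 - c * z1 - c * z2, 0) ∧
    b * z1 + b * z2 - a * z3 - a * z4 ≤ d * z1 + d * z2 - c * z3 - c * z4 ∧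
    b * z3 + b * z4 - a * z1 - a * z2 ≤ d * z3 + d * z4 - c * z1 - c * z2 ∧
    Set.Icc (-(b * z3 + b * z4 - a * z1 - a * z2)) (b * z1 + b * z2 - a * z3 - a * z4) ⊆
      Set.Icc (-(d * z3 + d * z4 - c * z1 - c * z2)) (d * z1 + d * z2 - c * z3 - c * z4) := by
  have hc : c ≤ 0 := hca.trans ha
  have hd : 0 ≤ d := hb.trans hbd
  refine ⟨mulA4_phi a b z1 z2 z3 z4 ha hb, mulA4_phi c d z1 z2 z3 z4 hc hd, ?_, ?_, ?_⟩
  · nlinarith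
  · nlinarith
  · apply Set.Icc_subset_Icc <;> nlinarith
end

section
/- Let φ be the piecewise embedding of intervals into ℝ⁴ and let F be the linear subspace of ℝ⁴ spanned by (1,−1,1,0) and (1,0,0,1). Then the induced map into the quotient ℝ⁴/F is additive: for all reals a ≤ b and c ≤ d, φ([a+c, b+d]) − φ([a,b]) − φ([c,d]) ∈ F, where [a+c, b+d] is the Minkowski sum of [a,b] and [c,d]. -/
/-- The subspace `F` of `ℝ⁴` spanned by `e₁-e₂+e₃ = (1,-1,1,0)` and
`e₁+e₄ = (1,0,0,1)`. -/
def FA4 : Submodule ℝ (ℝ × ℝ × ℝ × ℝ) :=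
  Submodule.span ℝ {((1 : ℝ), (-1 : ℝ), (1 : ℝ), (0 : ℝ)),
                    ((1 : ℝ), (0 : ℝ), (0 : ℝ), (1 : ℝ))}

lemma v1_mem : ((1 : ℝ), (-1 : ℝ), (1 : ℝ), (0 : ℝ)) ∈ FA4 :=
  Submodule.subset_span (by simp)

lemma v2_mem : ((1 : ℝ), (0 : ℝ), (0 : ℝ), (1 : ℝ)) ∈ FA4 :=
  Submodule.subset_span (by simp)

lemma phi_key (a b : ℝ) (hab : a ≤ b) :
    phiA4 a b - ((0 : ℝ), b, -a, (0 : ℝ)) ∈ FA4 := by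
  unfold phiA4
  split_ifs with h1 h2
  · have : ((a, b - a, 0, 0) : ℝ × ℝ × ℝ × ℝ) - (0, b, -a, 0)
        = a • ((1 : ℝ), (-1 : ℝ), (1 : ℝ), (0 : ℝ)) := by
      simp [Prod.ext_iff, Prod.smul_def]
    rw [this]
    exact FA4.smul_mem a v1_mem
  · simp only [sub_self]; exact FA4.zero_mem
  · have hb : b < 0 := lt_of_not_ge h2
    have : ((0, 0, b - a, -b) : ℝ × ℝ × ℝ × ℝ) - (0, b, -a, 0)
        = b • ((1 : ℝ), (-1 : ℝ), (1 : ℝ), (0 : ℝ))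
          + (-b) • ((1 : ℝ), (0 : ℝ), (0 : ℝ), (1 : ℝ)) := by
      simp [Prod.ext_iff, Prod.smul_def]
    rw [this]
    exact FA4.add_mem (FA4.smul_mem b v1_mem) (FA4.smul_mem (-b) v2_mem)

/-- The induced map `ℝ⁴/F` is additive on intervals: for all `a ≤ b` and
`c ≤ d`, `φ([a+c, b+d]) - φ([a,b]) - φ([c,d]) ∈ F`, where `[a+c, b+d]` is the
Minkowski sum of `[a,b]` and `[c,d]`. -/
theorem phi_additive_mod_F (a b c d : ℝ) (hab : a ≤ b) (hcd : c ≤ d) :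
    phiA4 (a + c) (b + d) - phiA4 a b - phiA4 c d ∈ FA4 := by
  have h1 := phi_key (a + c) (b + d) (add_le_add hab hcd)
  have h2 := phi_key a b hab
  have h3 := phi_key c d hcd
  have := FA4.sub_mem (FA4.sub_mem h1 h2) h3
  have heq : phiA4 (a + c) (b + d) - ((0 : ℝ), b + d, -(a + c), (0 : ℝ))
      - (phiA4 a b - ((0 : ℝ), b, -a, (0 : ℝ)))
      - (phiA4 c d - ((0 : ℝ), d, -c, (0 : ℝ)))
      = phiA4 (a + c) (b + d) - phiA4 a b - phiA4 c d := by
    ext <;> simp <;> ring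
  rwa [heq] at this
end

section
/- Let φ be the piecewise embedding of intervals into ℝ⁴ and let F be the linear subspace of ℝ⁴ spanned by (1,−1,1,0) and (1,0,0,1). Then the induced map into the quotient ℝ⁴/F is injective: for all intervals [a,b] and [c,d] (a ≤ b, c ≤ d), if φ([a,b]) − φ([c,d]) ∈ F then a = c and b = d. -/
lemma mem_FA4_iff (x y z w : ℝ) :
    ((x, y, z, w) : ℝ × ℝ × ℝ × ℝ) ∈ FA4 ↔ y = -z ∧ x = z + w := by
  rw [FA4, Submodule.mem_span_pair]
  constructor
  · rintro ⟨s, t, h⟩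
    simp [Prod.ext_iff] at h
    obtain ⟨h1, h2, h3, h4⟩ := h
    constructor <;> linarith
  · rintro ⟨h1, h2⟩
    refine ⟨z, w, ?_⟩
    simp [Prod.ext_iff]
    constructor <;> linarith

/-- The induced map `ℝ⁴/F` is injective on intervals: for all intervals
`[a,b]` and `[c,d]`, if `φ([a,b]) - φ([c,d]) ∈ F` then `a = c` and `b = d`. -/
theorem phi_injective_mod_F (a b c d : ℝ) (hab : a ≤ b) (hcd : c ≤ d)
    (h : phiA4 a b - phiA4 c d ∈ FA4) : a = c ∧ b = d := by
  unfold phiA4 at h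
  split_ifs at h with h1 h2 h3 h3 h4 h3 h4 <;>
    simp only [Prod.mk_sub_mk, mem_FA4_iff] at h <;>
    obtain ⟨e1, e2⟩ := h <;>
    constructor <;> linarith
end

section
/- Let α = (α₁, α₂, α₃, α₄) ∈ ℝ⁴. There exist reals λ, μ such that all four coordinates of α + λ(1,−1,1,0) + μ(1,0,0,1) are nonnegative if and only if α₂ + α₃ ≥ 0. Moreover, if α₂ + α₃ ≥ 0, then α₁−α₃−α₄ ≤ α₁+α₂−α₄ and φ([α₁−α₃−α₄, α₁+α₂−α₄]) − α ∈ F, where F is the linear subspace spanned by (1,−1,1,0) and (1,0,0,1); i.e. the class of α modulo F corresponds to the interval [α₁−α₃−α₄, α₁+α₂−α₄]. -/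
lemma memFA4 (l m : ℝ) : ((l + m, -l, l, m) : ℝ × ℝ × ℝ × ℝ) ∈ FA4 := by
  have h : ((l + m, -l, l, m) : ℝ × ℝ × ℝ × ℝ) =
      l • ((1 : ℝ), (-1 : ℝ), (1 : ℝ), (0 : ℝ)) +
      m • ((1 : ℝ), (0 : ℝ), (0 : ℝ), (1 : ℝ)) := by
    simp only [Prod.smul_mk, Prod.mk_add_mk, smul_eq_mul, Prod.mk.injEq]
    refine ⟨by ring, by ring, by ring, by ring⟩
  rw [h]
  exact Submodule.add_mem _
    (Submodule.smul_mem _ _ (Submodule.subset_span (by simp)))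
    (Submodule.smul_mem _ _ (Submodule.subset_span (by simp)))

/-- For `α = (α₁,α₂,α₃,α₄) ∈ ℝ⁴` there exist `λ, μ ∈ ℝ` making all four
coordinates of `α + λ(1,-1,1,0) + μ(1,0,0,1)` nonnegative iff `α₂ + α₃ ≥ 0`;
moreover if `α₂ + α₃ ≥ 0` then `α₁-α₃-α₄ ≤ α₁+α₂-α₄` and
`φ([α₁-α₃-α₄, α₁+α₂-α₄]) - α ∈ F`, i.e. the class of `α` modulo `F`
corresponds to the interval `[α₁-α₃-α₄, α₁+α₂-α₄]`. -/
theorem class_mod_F_is_interval (α₁ α₂ α₃ α₄ : ℝ) :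
    ((∃ l m : ℝ, 0 ≤ α₁ + l + m ∧ 0 ≤ α₂ - l ∧ 0 ≤ α₃ + l ∧ 0 ≤ α₄ + m) ↔
      0 ≤ α₂ + α₃) ∧
    (0 ≤ α₂ + α₃ →
      α₁ - α₃ - α₄ ≤ α₁ + α₂ - α₄ ∧
      phiA4 (α₁ - α₃ - α₄) (α₁ + α₂ - α₄) - (α₁, α₂, α₃, α₄) ∈ FA4) := by
  constructor
  · constructor
    · rintro ⟨l, m, h1, h2, h3, h4⟩
      linarith
    · intro h
      refine ⟨-α₃, max (α₃ - α₁) (-α₄), ?_, by linarith, by linarith, ?_⟩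
      · have := le_max_left (α₃ - α₁) (-α₄); linarith
      · have := le_max_right (α₃ - α₁) (-α₄); linarith
  · intro h
    refine ⟨by linarith, ?_⟩
    unfold phiA4
    split_ifs with h1 h2
    · convert memFA4 (-α₃) (-α₄) using 1
      simp only [Prod.mk_sub_mk, Prod.mk.injEq]
      refine ⟨by ring, by ring, by ring, by ring⟩
    · convert memFA4 (-α₁ + α₄) (-α₄) using 1
      simp only [Prod.mk_sub_mk, Prod.mk.injEq]
      refine ⟨by ring, by ring, by ring, by ring⟩
    · convert memFA4 (α₂) (-α₁ - α₂) using 1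
      simp only [Prod.mk_sub_mk, Prod.mk.injEq]
      refine ⟨by ring, by ring, by ring, by ring⟩
end
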